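/- arXiv:math/0607041 — 2 statements merged into one kernel-verified Lean document; each statement's English description precedes it below -/
import Mathlib

section
/- Let a, b be real numbers with a² + b² = 1/2. Then ∫_{−∞}^{+∞} e^{−y²/2} H_n(ay) dy = 0 whenever n is odd, and for n = 2p even, ∫_{−∞}^{+∞} e^{−y²/2} H_{2p}(ay) dy = (−2b²)^p · (2p)!/p! · √(2π). -/
/-- The Hermite polynomials `H_n(x) = (-1)^n e^{x²} (d/dx)^n e^{-x²}`. -/
noncomputable def hermiteH (n : ℕ) (x : ℝ) : ℝ :=
  (-1 : ℝ) ^ n * Real.exp (x ^ 2) * iteratedDeriv n (fun y => Real.exp (-y ^ 2)) x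

/-!
Write `H_n(x) = 2^{n/2} He_n(√2 x)` with the probabilists' Hermite polynomials `He_n`, so that
the integral is `2^{n/2} J_n` with `J_n = ∫ He_n(c y) e^{-y²/2} dy` and `c = √2 a`.
Gaussian integration by parts, `∫ y P(y) e^{-y²/2} dy = ∫ P'(y) e^{-y²/2} dy`, together with
`He_{n+1} = X He_n - He_n'` and `He_{n+1}' = (n + 1) He_n`, gives
`J_{n+2} = (n + 1)(c² - 1) J_n`, with `J_0 = √(2π)` and `J_1 = 0`; finally `c² - 1 = -2b²`.
-/

open Polynomial MeasureTheory Real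

lemma integrable_pow_mul_exp_neg_mul_sq (n : ℕ) {b : ℝ} (hb : 0 < b) :
    Integrable fun x : ℝ => x ^ n * exp (-b * x ^ 2) := by
  simpa only [rpow_natCast] using
    integrable_rpow_mul_exp_neg_mul_sq hb (s := n) (by linarith [n.cast_nonneg (α := ℝ)])

lemma integrable_eval_mul_exp_neg_mul_sq (P : ℝ[X]) {b : ℝ} (hb : 0 < b) :
    Integrable fun x : ℝ => P.eval x * exp (-b * x ^ 2) := by
  induction P using Polynomial.induction_on' with
  | add p q hp hq =>
    simp only [eval_add, add_mul]
    exact hp.add hq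
  | monomial n c =>
    simpa only [eval_monomial, mul_assoc] using (integrable_pow_mul_exp_neg_mul_sq n hb).const_mul c

lemma integral_mul_eval_mul_exp_neg_mul_sq (P : ℝ[X]) {b : ℝ} (hb : 0 < b) :
    2 * b * ∫ x : ℝ, x * P.eval x * exp (-b * x ^ 2)
      = ∫ x : ℝ, P.derivative.eval x * exp (-b * x ^ 2) := by
  have hderiv (x : ℝ) : HasDerivAt (fun x => P.eval x * exp (-b * x ^ 2))
      (P.derivative.eval x * exp (-b * x ^ 2) - 2 * b * (x * P.eval x * exp (-b * x ^ 2))) x := by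
    refine ((P.hasDerivAt x).fun_mul ((hasDerivAt_pow 2 x).const_mul (-b)).exp).congr_deriv ?_
    push_cast
    ring
  have hXP : Integrable fun x : ℝ => x * P.eval x * exp (-b * x ^ 2) := by
    have := integrable_eval_mul_exp_neg_mul_sq (X * P) hb
    simp only [eval_mul, eval_X] at this
    exact this
  have hzero := integral_eq_zero_of_hasDerivAt_of_integrable hderiv
    ((integrable_eval_mul_exp_neg_mul_sq _ hb).sub (hXP.const_mul _))
    (integrable_eval_mul_exp_neg_mul_sq P hb)
  rwa [integral_sub (integrable_eval_mul_exp_neg_mul_sq _ hb) (hXP.const_mul _),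
    integral_const_mul, sub_eq_zero, eq_comm] at hzero

lemma integrable_eval_const_mul_mul_exp_neg_mul_sq (P : ℝ[X]) (c : ℝ) {b : ℝ} (hb : 0 < b) :
    Integrable fun x : ℝ => P.eval (c * x) * exp (-b * x ^ 2) := by
  have := integrable_eval_mul_exp_neg_mul_sq (P.comp (C c * X)) hb
  simp only [eval_comp, eval_mul, eval_C, eval_X] at this
  exact this

lemma integral_mul_eval_const_mul_mul_gaussian (P : ℝ[X]) (c : ℝ) :
    ∫ x : ℝ, c * x * P.eval (c * x) * exp (-(1 / 2) * x ^ 2)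
      = c ^ 2 * ∫ x : ℝ, P.derivative.eval (c * x) * exp (-(1 / 2) * x ^ 2) := by
  have h := integral_mul_eval_mul_exp_neg_mul_sq (P.comp (C c * X)) one_half_pos
  simp only [eval_comp, eval_mul, eval_C, eval_X, derivative_comp, derivative_mul, derivative_C,
    derivative_X, zero_mul, zero_add, mul_one] at h
  simp only [mul_assoc, integral_const_mul] at h ⊢
  linear_combination c * h

noncomputable def realHermite (n : ℕ) : ℝ[X] :=
  (hermite n).map (algebraMap ℤ ℝ)

lemma derivative_hermite_succ (n : ℕ) :
    derivative (hermite (n + 1)) = C ((n : ℤ) + 1) * hermite n := by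
  induction n with
  | zero => simp [hermite_zero]
  | succ n ih =>
    rw [hermite_succ (n + 1), derivative_sub, derivative_mul, derivative_X, ih, derivative_mul,
      derivative_C, hermite_succ n]
    push_cast [C_add, C_1]
    ring

lemma realHermite_zero : realHermite 0 = 1 := by
  simp [realHermite, hermite_zero]

lemma realHermite_succ (n : ℕ) :
    realHermite (n + 1) = X * realHermite n - derivative (realHermite n) := by
  simp [realHermite, hermite_succ, derivative_map]

lemma derivative_realHermite_succ (n : ℕ) :
    derivative (realHermite (n + 1)) = C ((n : ℝ) + 1) * realHermite n := by
  rw [realHermite, derivative_map, derivative_hermite_succ, Polynomial.map_mul, map_C]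
  simp [realHermite]

noncomputable def gaussianHermiteIntegral (c : ℝ) (n : ℕ) : ℝ :=
  ∫ x : ℝ, (realHermite n).eval (c * x) * exp (-(1 / 2) * x ^ 2)

lemma gaussianHermiteIntegral_zero (c : ℝ) : gaussianHermiteIntegral c 0 = √(2 * π) := by
  simp only [gaussianHermiteIntegral, realHermite_zero, eval_one, one_mul, integral_gaussian]
  congr 1
  ring

lemma gaussianHermiteIntegral_succ (c : ℝ) (n : ℕ) :
    gaussianHermiteIntegral c (n + 1)
      = (c ^ 2 - 1) *
        ∫ x : ℝ, (realHermite n).derivative.eval (c * x) * exp (-(1 / 2) * x ^ 2) := by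
  have hmul := integrable_eval_const_mul_mul_exp_neg_mul_sq (X * realHermite n) c one_half_pos
  have hder :=
    integrable_eval_const_mul_mul_exp_neg_mul_sq (realHermite n).derivative c one_half_pos
  simp only [eval_mul, eval_X] at hmul
  simp only [gaussianHermiteIntegral, realHermite_succ, eval_sub, eval_mul, eval_X, sub_mul]
  rw [integral_sub hmul hder, integral_mul_eval_const_mul_mul_gaussian]
  ring

lemma gaussianHermiteIntegral_one (c : ℝ) : gaussianHermiteIntegral c 1 = 0 := by
  simp [gaussianHermiteIntegral_succ, realHermite_zero]

lemma gaussianHermiteIntegral_add_two (c : ℝ) (n : ℕ) :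
    gaussianHermiteIntegral c (n + 2) = (n + 1) * (c ^ 2 - 1) * gaussianHermiteIntegral c n := by
  rw [gaussianHermiteIntegral_succ, derivative_realHermite_succ]
  simp only [eval_mul, eval_C, mul_assoc, integral_const_mul, gaussianHermiteIntegral]
  ring

lemma gaussianHermiteIntegral_two_mul_add_one (c : ℝ) (m : ℕ) :
    gaussianHermiteIntegral c (2 * m + 1) = 0 := by
  induction m with
  | zero => exact gaussianHermiteIntegral_one c
  | succ m ih =>
    rw [show 2 * (m + 1) + 1 = 2 * m + 1 + 2 by ring, gaussianHermiteIntegral_add_two, ih, mul_zero]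

lemma factorial_two_mul_add_two_div (p : ℕ) :
    ((2 * p + 2).factorial / (p + 1).factorial : ℝ)
      = 2 * (2 * p + 1) * ((2 * p).factorial / p.factorial) := by
  rw [Nat.factorial_succ, Nat.factorial_succ, Nat.factorial_succ]
  push_cast
  field_simp
  ring

lemma two_pow_mul_gaussianHermiteIntegral_two_mul (c : ℝ) (p : ℕ) :
    2 ^ p * gaussianHermiteIntegral c (2 * p)
      = (c ^ 2 - 1) ^ p * ((2 * p).factorial / p.factorial : ℝ) * √(2 * π) := by
  induction p with
  | zero => simp [gaussianHermiteIntegral_zero]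
  | succ p ih =>
    rw [show 2 * (p + 1) = 2 * p + 2 by ring, gaussianHermiteIntegral_add_two,
      factorial_two_mul_add_two_div]
    push_cast
    linear_combination (2 * (2 * p + 1) * (c ^ 2 - 1)) * ih

/-- `hermiteH` is the physicists' Hermite polynomial, Mathlib's `hermite` the probabilists'. -/
lemma hermiteH_eq_sqrt_two_pow_mul_eval_realHermite (n : ℕ) (x : ℝ) :
    hermiteH n x = √2 ^ n * (realHermite n).eval (√2 * x) := by
  have hsq : ∀ y : ℝ, (√2 * y) ^ 2 / 2 = y ^ 2 := fun y => by
    rw [mul_pow, sq_sqrt zero_le_two]; ring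
  have hgauss : (fun y : ℝ => exp (-y ^ 2)) = fun y => exp (-((√2 * y) ^ 2 / 2)) := by
    simp only [hsq]
  have hsmooth : ContDiff ℝ n fun y : ℝ => exp (-(y ^ 2 / 2)) := by fun_prop
  rw [hermiteH, hgauss, iteratedDeriv_comp_const_mul hsmooth, iteratedDeriv_eq_iterate]
  beta_reduce
  rw [deriv_gaussian_eq_hermite_mul_gaussian, hsq, realHermite, eval_map_algebraMap]
  have hexp : exp (x ^ 2) * exp (-x ^ 2) = 1 := by rw [← exp_add]; simp
  have hsign : (-1 : ℝ) ^ n * (-1) ^ n = 1 := by rw [← mul_pow]; simp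
  linear_combination (exp (x ^ 2) * exp (-x ^ 2) * √2 ^ n * aeval (√2 * x) (hermite n)) * hsign
    + (√2 ^ n * aeval (√2 * x) (hermite n)) * hexp

lemma integral_gaussian_mul_hermiteH (a : ℝ) (n : ℕ) :
    ∫ y : ℝ, exp (-y ^ 2 / 2) * hermiteH n (a * y)
      = √2 ^ n * gaussianHermiteIntegral (√2 * a) n := by
  rw [gaussianHermiteIntegral, ← integral_const_mul]
  congr 1 with y
  rw [hermiteH_eq_sqrt_two_pow_mul_eval_realHermite, neg_div, neg_mul, one_div, inv_mul_eq_div,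
    mul_assoc √2 a y]
  ring

/-- If `a² + b² = 1/2` then `∫ e^{-y²/2} H_n(ay) dy` vanishes for odd `n`, and
equals `(-2b²)^p (2p)!/p! √(2π)` for `n = 2p` even. -/
theorem integral_gaussian_hermite_at_zero (a b : ℝ) (hab : a ^ 2 + b ^ 2 = 1 / 2) :
    (∀ n : ℕ, Odd n → (∫ y : ℝ, Real.exp (-y ^ 2 / 2) * hermiteH n (a * y)) = 0) ∧
    (∀ p : ℕ, (∫ y : ℝ, Real.exp (-y ^ 2 / 2) * hermiteH (2 * p) (a * y))
      = (-2 * b ^ 2) ^ p * ((2 * p).factorial / (p.factorial : ℝ))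
        * Real.sqrt (2 * Real.pi)) := by
  have hc : (√2 * a) ^ 2 - 1 = -2 * b ^ 2 := by
    rw [mul_pow, sq_sqrt zero_le_two]
    linarith
  refine ⟨?_, fun p => ?_⟩
  · rintro n ⟨m, rfl⟩
    rw [integral_gaussian_mul_hermiteH, gaussianHermiteIntegral_two_mul_add_one, mul_zero]
  · rw [integral_gaussian_mul_hermiteH, pow_mul, sq_sqrt zero_le_two,
      two_pow_mul_gaussianHermiteIntegral_two_mul, hc]
end

section
/- For every n ∈ ℕ, ∫_{−∞}^{+∞} e^{−t²/2} H_n(t) dt = 2^{n/2} (n−1)!! √(2π) if n is even, and ∫_{−∞}^{+∞} e^{−t²/2} H_n(t) dt = 0 if n is odd. -/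
open Polynomial MeasureTheory Real
open scoped Nat

noncomputable def physHermite : ℕ → ℝ[X]
  | 0 => 1
  | n + 1 => C 2 * X * physHermite n - derivative (physHermite n)

theorem iteratedDeriv_exp_neg_sq (n : ℕ) (x : ℝ) :
    iteratedDeriv n (fun y => exp (-y ^ 2)) x =
      (-1) ^ n * (physHermite n).eval x * exp (-x ^ 2) := by
  induction n generalizing x with
  | zero => simp [physHermite]
  | succ n ih =>
    have hexp : HasDerivAt (fun y : ℝ => exp (-y ^ 2)) (exp (-x ^ 2) * -(2 * x)) x := by
      simpa using ((hasDerivAt_pow 2 x).neg).exp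
    have hderiv : HasDerivAt (fun y => (-1) ^ n * (physHermite n).eval y * exp (-y ^ 2))
        ((-1) ^ n * (derivative (physHermite n)).eval x * exp (-x ^ 2)
          + (-1) ^ n * (physHermite n).eval x * (exp (-x ^ 2) * -(2 * x))) x :=
      (((physHermite n).hasDerivAt x).const_mul _).mul hexp
    rw [iteratedDeriv_succ, funext ih, hderiv.deriv, physHermite]
    simp only [eval_sub, eval_mul, eval_C, eval_X]
    ring

theorem hermiteH_eq_eval_physHermite (n : ℕ) (x : ℝ) : hermiteH n x = (physHermite n).eval x := by
  have hsign : ((-1 : ℝ) ^ n) ^ 2 = 1 := by rw [← pow_mul, pow_mul']; simp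
  have hexp : exp (x ^ 2) * exp (-x ^ 2) = 1 := by rw [← exp_add]; simp
  rw [hermiteH, iteratedDeriv_exp_neg_sq]
  linear_combination (physHermite n).eval x * (exp (x ^ 2) * exp (-x ^ 2) * hsign + hexp)

theorem derivative_physHermite_succ (n : ℕ) :
    derivative (physHermite (n + 1)) = C (2 * (n + 1) : ℝ) * physHermite n := by
  induction n with
  | zero => simp [physHermite]
  | succ n ih =>
    rw [physHermite, derivative_sub, derivative_mul, derivative_C_mul_X, ih, derivative_C_mul]
    have hrec : physHermite (n + 1) = 2 * X * physHermite n - derivative (physHermite n) := by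
      rw [physHermite, C_ofNat]
    push_cast
    simp only [C_mul, C_add, C_1, C_ofNat, C_eq_natCast]
    linear_combination (-2 * ((n : ℝ[X]) + 1)) * hrec

theorem abs_pow_mul_exp_neg_mul_sq_le {b : ℝ} (hb : 0 < b) (k : ℕ) (t : ℝ) :
    |t| ^ k * exp (-b * t ^ 2) ≤ k ! * exp (1 / (2 * b)) * exp (-(b / 2) * t ^ 2) := by
  have hpow : |t| ^ k ≤ k ! * exp |t| := by
    have := pow_div_factorial_le_exp |t| (abs_nonneg t) k
    rwa [div_le_iff₀ (by positivity), mul_comm] at this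
  -- AM-GM: `|t| ≤ b t² / 2 + 1 / (2b)`
  have hamgm : |t| - b * t ^ 2 ≤ 1 / (2 * b) - b / 2 * t ^ 2 := by
    rw [← sq_abs t]
    have : 0 ≤ (b * |t| - 1) ^ 2 / (2 * b) := by positivity
    field_simp at this ⊢
    nlinarith
  calc |t| ^ k * exp (-b * t ^ 2) ≤ k ! * exp |t| * exp (-b * t ^ 2) := by gcongr
    _ = k ! * exp (|t| - b * t ^ 2) := by rw [mul_assoc, ← exp_add]; ring_nf
    _ ≤ k ! * exp (1 / (2 * b) - b / 2 * t ^ 2) := by gcongr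
    _ = k ! * exp (1 / (2 * b)) * exp (-(b / 2) * t ^ 2) := by
      rw [mul_assoc, ← exp_add]; ring_nf

theorem integrable_exp_neg_mul_sq_mul_eval {b : ℝ} (hb : 0 < b) (p : ℝ[X]) :
    Integrable fun t : ℝ => exp (-b * t ^ 2) * p.eval t := by
  induction p using Polynomial.induction_on' with
  | add p q hp hq =>
    simp only [eval_add, mul_add]
    exact hp.add hq
  | monomial k a =>
    simp only [eval_monomial, mul_left_comm _ a]
    refine Integrable.const_mul ?_ a
    refine ((integrable_exp_neg_mul_sq (half_pos hb)).const_mul (k ! * exp (1 / (2 * b)))).mono'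
      (by fun_prop) ?_
    refine Filter.Eventually.of_forall fun t => ?_
    rw [norm_mul, norm_pow, norm_eq_abs, norm_eq_abs, abs_exp, mul_comm]
    exact abs_pow_mul_exp_neg_mul_sq_le hb k t

noncomputable def gaussIntegral (b : ℝ) (p : ℝ[X]) : ℝ :=
  ∫ t : ℝ, exp (-b * t ^ 2) * p.eval t

theorem gaussIntegral_C_mul (b a : ℝ) (p : ℝ[X]) :
    gaussIntegral b (C a * p) = a * gaussIntegral b p := by
  simp only [gaussIntegral, eval_mul, eval_C, mul_left_comm _ a]
  exact integral_const_mul a _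

theorem gaussIntegral_sub {b : ℝ} (hb : 0 < b) (p q : ℝ[X]) :
    gaussIntegral b (p - q) = gaussIntegral b p - gaussIntegral b q := by
  simp only [gaussIntegral, eval_sub, mul_sub]
  exact integral_sub (integrable_exp_neg_mul_sq_mul_eval hb p)
    (integrable_exp_neg_mul_sq_mul_eval hb q)

theorem gaussIntegral_derivative {b : ℝ} (hb : 0 < b) (p : ℝ[X]) :
    gaussIntegral b (derivative p) = 2 * b * gaussIntegral b (X * p) := by
  have hderiv (t : ℝ) : HasDerivAt (fun t => exp (-b * t ^ 2) * p.eval t)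
      (exp (-b * t ^ 2) * (derivative p - C (2 * b) * (X * p)).eval t) t := by
    have hexp : HasDerivAt (fun t : ℝ => exp (-b * t ^ 2))
        (exp (-b * t ^ 2) * (-b * (2 * t))) t := by
      simpa using ((hasDerivAt_pow 2 t).const_mul (-b)).exp
    refine (hexp.mul (p.hasDerivAt t)).congr_deriv ?_
    simp only [eval_sub, eval_mul, eval_C, eval_X]
    ring
  have hzero := integral_eq_zero_of_hasDerivAt_of_integrable hderiv
    (integrable_exp_neg_mul_sq_mul_eval hb _) (integrable_exp_neg_mul_sq_mul_eval hb p)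
  rwa [← gaussIntegral, gaussIntegral_sub hb, gaussIntegral_C_mul, sub_eq_zero] at hzero

theorem gaussIntegral_physHermite_succ (n : ℕ) :
    gaussIntegral (1 / 2) (physHermite (n + 1)) =
      gaussIntegral (1 / 2) (derivative (physHermite n)) := by
  have hb : (0 : ℝ) < 1 / 2 := by norm_num
  rw [physHermite, gaussIntegral_sub hb, mul_assoc, gaussIntegral_C_mul,
    gaussIntegral_derivative hb]
  ring

theorem gaussIntegral_physHermite_two_mul (m : ℕ) :
    gaussIntegral (1 / 2) (physHermite (2 * m)) = 2 ^ m * ((2 * m - 1)‼ : ℝ) * sqrt (2 * π) := by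
  induction m with
  | zero =>
    simp only [gaussIntegral, physHermite, eval_one, mul_one, integral_gaussian]
    norm_num [mul_comm]
  | succ m ih =>
    rw [show 2 * (m + 1) = 2 * m + 1 + 1 by ring, gaussIntegral_physHermite_succ,
      derivative_physHermite_succ, gaussIntegral_C_mul, ih, Nat.add_sub_cancel,
      Nat.doubleFactorial_add_one]
    push_cast
    ring

theorem gaussIntegral_physHermite_two_mul_add_one (m : ℕ) :
    gaussIntegral (1 / 2) (physHermite (2 * m + 1)) = 0 := by
  induction m with
  | zero =>
    rw [gaussIntegral_physHermite_succ]
    simp [physHermite, gaussIntegral]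
  | succ m ih =>
    rw [show 2 * (m + 1) + 1 = 2 * m + 1 + 1 + 1 by ring, gaussIntegral_physHermite_succ,
      derivative_physHermite_succ, gaussIntegral_C_mul, ih, mul_zero]

/-- `∫_{-∞}^{∞} e^{-t²/2} H_n(t) dt = 2^{n/2}(n-1)!!√(2π)` for even `n`, `0` for odd. -/
theorem integral_gaussian_hermite_total (n : ℕ) :
    (Even n → (∫ t : ℝ, Real.exp (-t ^ 2 / 2) * hermiteH n t)
        = (2 : ℝ) ^ (n / 2) * (Nat.doubleFactorial (n - 1) : ℝ) * Real.sqrt (2 * Real.pi)) ∧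
    (Odd n → (∫ t : ℝ, Real.exp (-t ^ 2 / 2) * hermiteH n t) = 0) := by
  have hI : (∫ t : ℝ, exp (-t ^ 2 / 2) * hermiteH n t) =
      gaussIntegral (1 / 2) (physHermite n) := by
    simp only [gaussIntegral, hermiteH_eq_eval_physHermite]
    congr with t
    ring_nf
  refine ⟨?_, ?_⟩
  · rintro ⟨m, rfl⟩
    rw [hI, ← two_mul, Nat.mul_div_cancel_left m two_pos]
    exact gaussIntegral_physHermite_two_mul m
  · rintro ⟨m, rfl⟩
    rw [hI, gaussIntegral_physHermite_two_mul_add_one]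
end
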